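/- arXiv:2408.00034 — 2 statements merged into one kernel-verified Lean document; each statement's English description precedes it below -/
import Mathlib

section
/- Let $S$ be a positive operator on $L^p$ with $p\in(1,\infty)$. If there exist $\lambda>0$ and a nonzero nonnegative function $v\in L^p_+$ with $Sv \geq \lambda v$, then $\rho(S) \geq \rho(S_A) \geq \lambda$, where $A=\operatorname{supp}(v)$ and $S_A = M_A S M_A$ is the projection of $S$ on $A$. -/
open MeasureTheory ENNReal

set_option linter.unusedSectionVars false

section General

variable {E : Type*} [NormedAddCommGroup E] [Lattice E] [HasSolidNorm E] [IsOrderedAddMonoid E] [NormedSpace ℝ E] [CompleteSpace E]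

/-- A positive operator on an ordered normed space. -/
def PosOp (T : E →L[ℝ] E) : Prop := ∀ f : E, 0 ≤ f → 0 ≤ T f

namespace PosOp

theorem one : PosOp (1 : E →L[ℝ] E) := fun f hf => by simpa using hf

theorem mono {T : E →L[ℝ] E} (hT : PosOp T) {f g : E} (h : f ≤ g) : T f ≤ T g := by
  have := hT (g - f) (by simpa [sub_nonneg] using h)
  simpa [map_sub, sub_nonneg] using this

theorem mul {T U : E →L[ℝ] E} (hT : PosOp T) (hU : PosOp U) : PosOp (T * U) := fun f hf => by
  rw [ContinuousLinearMap.mul_apply]; exact hT _ (hU f hf)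

theorem pow {T : E →L[ℝ] E} (hT : PosOp T) : ∀ n : ℕ, PosOp (T ^ n)
  | 0 => by rw [pow_zero]; exact one
  | n + 1 => by rw [pow_succ]; exact (hT.pow n).mul hT

theorem tsum {F : ℕ → E →L[ℝ] E} (hsum : Summable F) (h : ∀ n, PosOp (F n)) :
    PosOp (∑' n, F n) := by
  intro f hf
  have happ : (∑' n, F n) f = ∑' n, F n f := by
    have := (ContinuousLinearMap.apply ℝ E f).map_tsum hsum
    simpa using this
  rw [happ]
  exact tsum_nonneg fun n => h n f hf

theorem abs_apply_le {T : E →L[ℝ] E} (hT : PosOp T) (f : E) : |T f| ≤ T |f| := by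
  have h1 : T f = T (f⁺) - T (f⁻) := by rw [← map_sub]; congr 1; exact (posPart_sub_negPart f).symm
  calc |T f| = |T (f⁺) - T (f⁻)| := by rw [h1]
    _ = |T (f⁺) + -T (f⁻)| := by rw [sub_eq_add_neg]
    _ ≤ |T (f⁺)| + |-T (f⁻)| := abs_add_le _ _
    _ = |T (f⁺)| + |T (f⁻)| := by rw [abs_neg]
    _ = T (f⁺) + T (f⁻) := by
        rw [abs_of_nonneg (hT _ (posPart_nonneg f)), abs_of_nonneg (hT _ (negPart_nonneg f))]
    _ = T |f| := by rw [← map_add]; congr 1; exact posPart_add_negPart f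

theorem norm_le {T U : E →L[ℝ] E} (hT : PosOp T) (hU : PosOp U)
    (hle : ∀ f : E, 0 ≤ f → T f ≤ U f) : ‖T‖ ≤ ‖U‖ := by
  refine ContinuousLinearMap.opNorm_le_bound _ (norm_nonneg U) fun f => ?_
  have h1 : |T f| ≤ U |f| := (hT.abs_apply_le f).trans (hle |f| (abs_nonneg f))
  have h2 : ‖T f‖ ≤ ‖U |f|‖ :=
    HasSolidNorm.solid (by rwa [abs_of_nonneg (hU _ (abs_nonneg f))])
  calc ‖T f‖ ≤ ‖U |f|‖ := h2
    _ ≤ ‖U‖ * ‖|f|‖ := U.le_opNorm _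
    _ = ‖U‖ * ‖f‖ := by rw [norm_abs_eq_norm]

theorem pow_apply_le {T U : E →L[ℝ] E} (hT : PosOp T) (hU : PosOp U)
    (hle : ∀ f : E, 0 ≤ f → T f ≤ U f) :
    ∀ (n : ℕ) (f : E), 0 ≤ f → (T ^ n) f ≤ (U ^ n) f := by
  intro n
  induction n with
  | zero => intro f hf; simp
  | succ n ih =>
    intro f hf
    have h1 : (T ^ (n + 1)) f = (T ^ n) (T f) := by
      rw [pow_succ, ContinuousLinearMap.mul_apply]
    have h2 : (U ^ (n + 1)) f = (U ^ n) (U f) := by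
      rw [pow_succ, ContinuousLinearMap.mul_apply]
    rw [h1, h2]
    calc (T ^ n) (T f) ≤ (U ^ n) (T f) := ih _ (hT f hf)
      _ ≤ (U ^ n) (U f) := (hU.pow n).mono (hle f hf)

end PosOp

/-- Geometric-series inverse positivity. -/
theorem geom_posOp {a R0 B : E →L[ℝ] E} (hR0 : PosOp R0) (hB : PosOp B)
    (h1 : a * R0 = 1) (h2 : R0 * a = 1) (hlt : ‖B * R0‖ < 1) :
    IsUnit (a - B) ∧ PosOp (Ring.inverse (a - B)) := by
  set t := B * R0 with ht
  have hsum : Summable (fun n => t ^ n) := summable_geometric_of_norm_lt_one hlt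
  set x := R0 * ∑' n, t ^ n with hx
  have hfac : a - B = (1 - t) * a := by
    rw [sub_mul, one_mul, ht, mul_assoc, h2, mul_one]
  have hxa : x * (a - B) = 1 := by
    rw [hfac, hx, mul_assoc, ← mul_assoc (∑' n, t ^ n), geom_series_mul_neg t hlt, one_mul, h2]
  have hax : (a - B) * x = 1 := by
    rw [hfac, hx, mul_assoc, ← mul_assoc a, h1, one_mul, mul_neg_geom_series t hlt]
  letI u : (E →L[ℝ] E)ˣ := ⟨a - B, x, hax, hxa⟩
  have hinv : Ring.inverse (a - B) = x := Ring.inverse_unit u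
  refine ⟨⟨u, rfl⟩, ?_⟩
  rw [hinv]
  exact hR0.mul (PosOp.tsum hsum fun n => (hB.mul hR0).pow n)

/-- Key lemma: for a positive operator, if every real `s ≥ r` lies in the resolvent set,
then `‖T^n‖` grows at most like `r^n`. -/
theorem posOp_norm_pow_le
    (hsm : ∀ (c : ℝ) (f : E), 0 ≤ c → 0 ≤ f → 0 ≤ c • f)
    {T : E →L[ℝ] E} (hT : PosOp T) {r : ℝ} (hr : 0 < r)
    (hres : ∀ s : ℝ, r ≤ s → IsUnit (algebraMap ℝ (E →L[ℝ] E) s - T)) :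
    ∃ C : ℝ, ∀ n : ℕ, ‖T ^ n‖ ≤ C * r ^ n := by
  classical
  obtain ⟨b, hbdef⟩ : ∃ b : ℝ, b = ‖T‖ + r := ⟨_, rfl⟩
  have hrb : r ≤ b := by rw [hbdef]; exact le_add_of_nonneg_left (norm_nonneg T)
  have hb0 : 0 < b := lt_of_lt_of_le hr hrb
  have hTb : ‖T‖ < b := by rw [hbdef]; linarith
  obtain ⟨Rv, hRvdef⟩ : ∃ Rv : ℝ → E →L[ℝ] E,
      Rv = fun s => Ring.inverse (algebraMap ℝ (E →L[ℝ] E) s - T) := ⟨_, rfl⟩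
  have hRv : ∀ s : ℝ, Rv s = Ring.inverse (algebraMap ℝ (E →L[ℝ] E) s - T) := fun s => by
    rw [hRvdef]
  have hone_le : ‖(1 : E →L[ℝ] E)‖ ≤ 1 := by
    rw [ContinuousLinearMap.one_def]; exact ContinuousLinearMap.norm_id_le
  -- continuity and bound on [r, b]
  have hcont : ContinuousOn Rv (Set.Icc r b) := by
    rw [hRvdef]
    intro s hs
    have h1 : ContinuousAt (fun s : ℝ => algebraMap ℝ (E →L[ℝ] E) s - T) s :=
      ((continuous_algebraMap ℝ (E →L[ℝ] E)).sub continuous_const).continuousAt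
    have h2 : ContinuousAt Ring.inverse (algebraMap ℝ (E →L[ℝ] E) s - T) := by
      have hu := hres s hs.1
      simpa [hu.unit_spec] using NormedRing.inverse_continuousAt hu.unit
    have h3 := ContinuousAt.comp (g := Ring.inverse)
        (f := fun s : ℝ => algebraMap ℝ (E →L[ℝ] E) s - T) (x := s) h2 h1
    exact h3.continuousWithinAt
  obtain ⟨C0, hC0⟩ := (isCompact_Icc (a := r) (b := b)).exists_bound_of_continuousOn hcont
  obtain ⟨C1, hC1def⟩ : ∃ C1 : ℝ, C1 = max C0 1 := ⟨_, rfl⟩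
  have hC1pos : 0 < C1 := by rw [hC1def]; exact lt_of_lt_of_le one_pos (le_max_right _ _)
  have hC1' : ∀ s ∈ Set.Icc r b, ‖Rv s‖ ≤ C1 := fun s hs => by
    rw [hC1def]; exact (hC0 s hs).trans (le_max_left _ _)
  obtain ⟨δ, hδdef⟩ : ∃ δ : ℝ, δ = 1 / (2 * C1) := ⟨_, rfl⟩
  have hδpos : 0 < δ := by rw [hδdef]; positivity
  have hδC1 : δ * C1 = 1 / 2 := by rw [hδdef]; field_simp
  -- base case : positivity of the resolvent at b
  have base : PosOp (Rv b) := by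
    have hR0 : PosOp ((b⁻¹ : ℝ) • (1 : E →L[ℝ] E)) := by
      intro f hf
      rw [ContinuousLinearMap.smul_apply, ContinuousLinearMap.one_apply]
      exact hsm _ _ (by positivity) hf
    have h1 : algebraMap ℝ (E →L[ℝ] E) b * ((b⁻¹ : ℝ) • (1 : E →L[ℝ] E)) = 1 := by
      rw [← Algebra.algebraMap_eq_smul_one, ← map_mul, mul_inv_cancel₀ hb0.ne', map_one]
    have h2 : ((b⁻¹ : ℝ) • (1 : E →L[ℝ] E)) * algebraMap ℝ (E →L[ℝ] E) b = 1 := by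
      rw [← Algebra.algebraMap_eq_smul_one, ← map_mul, inv_mul_cancel₀ hb0.ne', map_one]
    have hlt : ‖T * ((b⁻¹ : ℝ) • (1 : E →L[ℝ] E))‖ < 1 := by
      calc ‖T * ((b⁻¹ : ℝ) • (1 : E →L[ℝ] E))‖
          ≤ ‖T‖ * ‖(b⁻¹ : ℝ) • (1 : E →L[ℝ] E)‖ := norm_mul_le _ _
        _ ≤ ‖T‖ * (b⁻¹ * 1) := by
            refine mul_le_mul_of_nonneg_left ?_ (norm_nonneg T)
            rw [norm_smul b⁻¹ (1 : E →L[ℝ] E), Real.norm_eq_abs,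
              abs_of_nonneg (by positivity)]
            exact mul_le_mul_of_nonneg_left hone_le (by positivity)
        _ = ‖T‖ / b := by field_simp
        _ < 1 := (div_lt_one hb0).mpr hTb
    have := (geom_posOp hR0 hT h1 h2 hlt).2
    rwa [hRv b]
  -- positivity propagation
  have claim : ∀ n : ℕ, ∀ s : ℝ, s ∈ Set.Icc r b → b - n * δ ≤ s → PosOp (Rv s) := by
    intro n
    induction n with
    | zero =>
      intro s hs hbs
      have hsb : s = b := le_antisymm hs.2 (by simpa using hbs)
      rw [hsb]; exact base
    | succ n ih =>
      intro s hs hbs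
      by_cases hcase : b - n * δ ≤ s
      · exact ih s hs hcase
      · push_neg at hcase
        obtain ⟨s', hs'def⟩ : ∃ s' : ℝ, s' = min (s + δ) b := ⟨_, rfl⟩
        have hs'1 : s' ≤ s + δ := by rw [hs'def]; exact min_le_left _ _
        have hs'2 : s' ≤ b := by rw [hs'def]; exact min_le_right _ _
        have hss' : s ≤ s' := by rw [hs'def]; exact le_min (by linarith) hs.2
        have hs'mem : s' ∈ Set.Icc r b := ⟨le_trans hs.1 hss', hs'2⟩
        have hps' : PosOp (Rv s') := by
          refine ih s' hs'mem ?_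
          rw [hs'def]
          refine le_min ?_ ?_
          · push_cast at hbs ⊢; linarith
          · have : (0:ℝ) ≤ n * δ := by positivity
            linarith
        have hδ' : s' - s ≤ δ := by linarith
        have hBpos : PosOp (((s' - s : ℝ)) • (1 : E →L[ℝ] E)) := by
          intro f hf
          rw [ContinuousLinearMap.smul_apply, ContinuousLinearMap.one_apply]
          exact hsm _ _ (by linarith) hf
        have hu' : IsUnit (algebraMap ℝ (E →L[ℝ] E) s' - T) := hres s' hs'mem.1
        have h1 : (algebraMap ℝ (E →L[ℝ] E) s' - T) * Rv s' = 1 := by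
          rw [hRv s']; exact Ring.mul_inverse_cancel _ hu'
        have h2 : Rv s' * (algebraMap ℝ (E →L[ℝ] E) s' - T) = 1 := by
          rw [hRv s']; exact Ring.inverse_mul_cancel _ hu'
        have hlt : ‖((s' - s : ℝ) • (1 : E →L[ℝ] E)) * Rv s'‖ < 1 := by
          calc ‖((s' - s : ℝ) • (1 : E →L[ℝ] E)) * Rv s'‖
              ≤ ‖(s' - s : ℝ) • (1 : E →L[ℝ] E)‖ * ‖Rv s'‖ := norm_mul_le _ _
            _ ≤ δ * C1 := by
                refine mul_le_mul ?_ (hC1' s' hs'mem) (norm_nonneg _) hδpos.le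
                rw [norm_smul (s' - s) (1 : E →L[ℝ] E), Real.norm_eq_abs,
                  abs_of_nonneg (by linarith)]
                calc (s' - s) * ‖(1 : E →L[ℝ] E)‖ ≤ (s' - s) * 1 :=
                      mul_le_mul_of_nonneg_left hone_le (by linarith)
                  _ ≤ δ := by linarith
            _ = 1 / 2 := hδC1
            _ < 1 := by norm_num
        have hkey := (geom_posOp hps' hBpos h1 h2 hlt).2
        have heq : algebraMap ℝ (E →L[ℝ] E) s' - T - (s' - s : ℝ) • (1 : E →L[ℝ] E)
            = algebraMap ℝ (E →L[ℝ] E) s - T := by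
          rw [Algebra.algebraMap_eq_smul_one, Algebra.algebraMap_eq_smul_one, sub_smul]
          abel
        rw [heq] at hkey
        rwa [hRv s]
  -- positivity of the resolvent at r
  obtain ⟨m, hm⟩ := exists_nat_ge ((b - r) / δ)
  have hRpos : PosOp (Rv r) := by
    refine claim m r ⟨le_refl r, hrb⟩ ?_
    have : b - r ≤ m * δ := by
      rw [div_le_iff₀ hδpos] at hm; linarith
    linarith
  have hur : IsUnit (algebraMap ℝ (E →L[ℝ] E) r - T) := hres r le_rfl
  have hid : ∀ f : E, r • Rv r f - T (Rv r f) = f := by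
    intro f
    have hmul : (algebraMap ℝ (E →L[ℝ] E) r - T) * Rv r = 1 := by
      rw [hRv r]; exact Ring.mul_inverse_cancel _ hur
    have := DFunLike.congr_fun hmul f
    simpa [ContinuousLinearMap.mul_apply, ContinuousLinearMap.sub_apply,
      Algebra.algebraMap_eq_smul_one, ContinuousLinearMap.smul_apply,
      ContinuousLinearMap.one_apply] using this
  -- iterate bound
  have claim2 : ∀ (n : ℕ) (f : E), 0 ≤ f → (T ^ n) f ≤ r ^ (n + 1) • Rv r f := by
    intro n
    induction n with
    | zero =>
      intro f hf
      have h1 : 0 ≤ T (Rv r f) := hT _ (hRpos f hf)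
      calc (T ^ 0) f = f := by rw [pow_zero, ContinuousLinearMap.one_apply]
        _ = r • Rv r f - T (Rv r f) := (hid f).symm
        _ ≤ r • Rv r f := sub_le_self _ h1
        _ = r ^ (0 + 1) • Rv r f := by norm_num
    | succ n ih =>
      intro f hf
      have h1 : (T ^ (n + 1)) f = T ((T ^ n) f) := by
        rw [pow_succ', ContinuousLinearMap.mul_apply]
      have h2 : T ((T ^ n) f) ≤ T (r ^ (n + 1) • Rv r f) := hT.mono (ih f hf)
      have h3 : T (r ^ (n + 1) • Rv r f) = r ^ (n + 1) • T (Rv r f) := map_smul T _ _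
      have h4 : T (Rv r f) = r • Rv r f - f := by
        have h := hid f
        have : T (Rv r f) + f = r • Rv r f := by rw [add_comm]; exact (sub_eq_iff_eq_add.mp h).symm
        linear_combination (norm := abel) this
      have h5 : r ^ (n + 1) • (r • Rv r f - f) ≤ r ^ (n + 1) • (r • Rv r f) := by
        have h6 : 0 ≤ r ^ (n + 1) • f := hsm _ _ (by positivity) hf
        rw [smul_sub]
        simpa using h6
      rw [h1]
      calc T ((T ^ n) f) ≤ r ^ (n + 1) • T (Rv r f) := by rw [← h3]; exact h2
        _ = r ^ (n + 1) • (r • Rv r f - f) := by rw [h4]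
        _ ≤ r ^ (n + 1) • (r • Rv r f) := h5
        _ = r ^ (n + 1 + 1) • Rv r f := by rw [smul_smul, ← pow_succ]
  refine ⟨r * ‖Rv r‖, fun n => ?_⟩
  refine ContinuousLinearMap.opNorm_le_bound _ (by positivity) fun f => ?_
  have h1 : |(T ^ n) f| ≤ (T ^ n) |f| := (hT.pow n).abs_apply_le f
  have h2 : (T ^ n) |f| ≤ r ^ (n + 1) • Rv r |f| := claim2 n |f| (abs_nonneg f)
  have h3 : 0 ≤ r ^ (n + 1) • Rv r |f| := hsm _ _ (by positivity) (hRpos _ (abs_nonneg f))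
  have h4 : ‖(T ^ n) f‖ ≤ ‖r ^ (n + 1) • Rv r |f|‖ :=
    HasSolidNorm.solid (by rw [abs_of_nonneg h3]; exact h1.trans h2)
  calc ‖(T ^ n) f‖ ≤ ‖r ^ (n + 1) • Rv r |f|‖ := h4
    _ = r ^ (n + 1) * ‖Rv r |f|‖ := by
        rw [norm_smul (r ^ (n + 1)) (Rv r |f|), Real.norm_eq_abs,
          abs_of_nonneg (by positivity)]
    _ ≤ r ^ (n + 1) * (‖Rv r‖ * ‖f‖) := by
        refine mul_le_mul_of_nonneg_left ?_ (by positivity)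
        calc ‖Rv r |f|‖ ≤ ‖Rv r‖ * ‖|f|‖ := (Rv r).le_opNorm _
          _ = ‖Rv r‖ * ‖f‖ := by rw [norm_abs_eq_norm]
    _ = r * ‖Rv r‖ * r ^ n * ‖f‖ := by ring

/-- From a geometric norm bound on powers, bound the (real) spectral radius. -/
theorem spectralRadius_le_of_norm_pow_le {T : E →L[ℝ] E} {C r : ℝ} (hr : 0 < r)
    (h : ∀ n : ℕ, ‖T ^ n‖ ≤ C * r ^ n) : spectralRadius ℝ T ≤ ENNReal.ofReal r := by
  have hone_le : ‖(1 : E →L[ℝ] E)‖ ≤ 1 := by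
    rw [ContinuousLinearMap.one_def]; exact ContinuousLinearMap.norm_id_le
  refine iSup₂_le fun k hk => ?_
  have hk' : ∀ n : ℕ, |k| ^ n ≤ C * r ^ n := by
    intro n
    have hmem : k ^ n ∈ spectrum ℝ (T ^ n) := spectrum.pow_image_subset T n ⟨k, hk, rfl⟩
    have hnorm := spectrum.norm_le_norm_mul_of_mem hmem
    calc |k| ^ n = ‖k ^ n‖ := by rw [norm_pow, Real.norm_eq_abs]
      _ ≤ ‖T ^ n‖ * ‖(1 : E →L[ℝ] E)‖ := hnorm
      _ ≤ ‖T ^ n‖ * 1 := mul_le_mul_of_nonneg_left hone_le (norm_nonneg _)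
      _ = ‖T ^ n‖ := mul_one _
      _ ≤ C * r ^ n := h n
  have habs : |k| ≤ r := by
    by_contra hlt
    push_neg at hlt
    have hdiv : ∀ n : ℕ, (|k| / r) ^ n ≤ C := by
      intro n
      rw [div_pow, div_le_iff₀ (pow_pos hr n)]
      exact hk' n
    obtain ⟨n, hn⟩ := pow_unbounded_of_one_lt C ((one_lt_div hr).2 hlt)
    exact absurd (hdiv n) (not_le.2 hn)
  calc (‖k‖₊ : ℝ≥0∞) = ENNReal.ofReal |k| := Real.enorm_eq_ofReal_abs k
    _ ≤ ENNReal.ofReal r := ENNReal.ofReal_le_ofReal habs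


theorem isUnit_of_spectralRadius_lt {E' : Type*} [NormedAddCommGroup E'] [NormedSpace ℝ E'] [CompleteSpace E'] {T : E' →L[ℝ] E'} {r : ℝ} (hr : 0 < r)
    (h : spectralRadius ℝ T < ENNReal.ofReal r) (s : ℝ) (hs : r ≤ s) :
    IsUnit (algebraMap ℝ (E' →L[ℝ] E') s - T) := by
  rw [← spectrum.notMem_iff]
  intro hmem
  have h1 : (‖s‖₊ : ℝ≥0∞) ≤ spectralRadius ℝ T :=
    le_iSup₂ (f := fun k (_ : k ∈ spectrum ℝ T) => (‖k‖₊ : ℝ≥0∞)) s hmem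
  rw [show (‖s‖₊ : ℝ≥0∞) = ENNReal.ofReal s from Real.enorm_eq_ofReal (hr.le.trans hs)] at h1
  exact absurd (le_trans (ENNReal.ofReal_le_ofReal hs) h1) (not_le.2 h)


end General

variable {Ω : Type*} [MeasurableSpace Ω]

/-- A positive operator on `L^p`. -/
def IsPositiveOp {p : ℝ≥0∞} [Fact (1 ≤ p)] (μ : Measure Ω)
    (S : Lp ℝ p μ →L[ℝ] Lp ℝ p μ) : Prop :=
  ∀ f : Lp ℝ p μ, 0 ≤ f → 0 ≤ S f

/-- **Supersolutions and the spectral radius.**  If `S` is a positive operator on `L^p`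
(`p ∈ (1,∞)`), `λ > 0` and `v ∈ L^p_+ \ {0}` satisfies `S v ≥ λ v`, then
`ρ(S) ≥ ρ(S_A) ≥ λ` where `A = supp v` and `S_A = M_A S M_A`.
Here `MA` is the multiplication operator by the indicator of `A = {v ≠ 0}`. -/
theorem supersolution_spectral_radius
    {μ : Measure Ω} [SigmaFinite μ]
    {p : ℝ≥0∞} [Fact (1 ≤ p)] (hp1 : 1 < p) (hp2 : p ≠ ∞)
    (S : Lp ℝ p μ →L[ℝ] Lp ℝ p μ) (hS : IsPositiveOp μ S)
    (lam : ℝ) (hlam : 0 < lam)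
    (v : Lp ℝ p μ) (hv0 : 0 ≤ v) (hvne : v ≠ 0)
    (hsuper : lam • v ≤ S v)
    (MA : Lp ℝ p μ →L[ℝ] Lp ℝ p μ)
    (hMA : ∀ f : Lp ℝ p μ, ⇑(MA f) =ᵐ[μ] ({x | v x ≠ 0}).indicator ⇑f) :
    ENNReal.ofReal lam ≤ spectralRadius ℝ (MA ∘L S ∘L MA) ∧
      spectralRadius ℝ (MA ∘L S ∘L MA) ≤ spectralRadius ℝ S := by
  set T : Lp ℝ p μ →L[ℝ] Lp ℝ p μ := MA ∘L S ∘L MA with hTdef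
  -- scalar multiplication by nonnegative reals preserves positivity in Lp
  have hsm : ∀ (c : ℝ) (f : Lp ℝ p μ), 0 ≤ c → 0 ≤ f → 0 ≤ c • f := by
    intro c f hc hf
    rw [← Lp.coeFn_nonneg] at hf ⊢
    filter_upwards [hf, Lp.coeFn_smul c f] with x h1 h2
    rw [h2]
    simpa using mul_nonneg hc (by simpa using h1)
  have hSpos : PosOp S := hS
  have hMApos : PosOp MA := by
    intro f hf
    rw [← Lp.coeFn_nonneg] at hf ⊢
    filter_upwards [hf, hMA f] with x h1 h2
    rw [h2]
    exact Set.indicator_apply_nonneg fun _ => by simpa using h1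
  have hMAle : ∀ f : Lp ℝ p μ, 0 ≤ f → MA f ≤ f := by
    intro f hf
    rw [← Lp.coeFn_le]
    rw [← Lp.coeFn_nonneg] at hf
    filter_upwards [hf, hMA f] with x h1 h2
    rw [h2]
    by_cases hx : x ∈ {y | v y ≠ 0}
    · rw [Set.indicator_of_mem hx]
    · rw [Set.indicator_of_notMem hx]; simpa using h1
  have hMAv : MA v = v := by
    refine Lp.ext ((hMA v).trans (Filter.EventuallyEq.of_eq ?_))
    exact Set.indicator_eq_self.2 fun x hx => hx
  have hTapp : ∀ f : Lp ℝ p μ, T f = MA (S (MA f)) := fun f => rfl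
  have hTpos : PosOp T := fun f hf => by rw [hTapp]; exact hMApos _ (hSpos _ (hMApos f hf))
  have hTv : lam • v ≤ T v := by
    have h1 : MA (lam • v) ≤ MA (S v) := hMApos.mono hsuper
    have h2 : MA (lam • v) = lam • v := by rw [_root_.map_smul, hMAv]
    have h3 : T v = MA (S v) := by rw [hTapp, hMAv]
    rw [h2] at h1; rw [h3]; exact h1
  have hTn : ∀ n : ℕ, lam ^ n • v ≤ (T ^ n) v := by
    intro n
    induction n with
    | zero => simp
    | succ n ih =>
      have h1 : (T ^ (n + 1)) v = T ((T ^ n) v) := by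
        rw [pow_succ', ContinuousLinearMap.mul_apply]
      have h2 : T (lam ^ n • v) ≤ T ((T ^ n) v) := hTpos.mono ih
      have h3 : T (lam ^ n • v) = lam ^ n • T v := map_smul T _ _
      have h5 : 0 ≤ lam ^ n • (T v - lam • v) := hsm _ _ (by positivity) (sub_nonneg.2 hTv)
      rw [smul_sub] at h5
      calc lam ^ (n + 1) • v = lam ^ n • (lam • v) := by rw [smul_smul, ← pow_succ]
        _ ≤ lam ^ n • T v := sub_nonneg.1 h5
        _ = T (lam ^ n • v) := h3.symm
        _ ≤ T ((T ^ n) v) := h2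
        _ = (T ^ (n + 1)) v := h1.symm
  have hvpos : 0 < ‖v‖ := norm_pos_iff.2 hvne
  have hlow : ∀ n : ℕ, lam ^ n ≤ ‖T ^ n‖ := by
    intro n
    have h0 : 0 ≤ lam ^ n • v := hsm _ _ (by positivity) hv0
    have h1 : lam ^ n • v ≤ (T ^ n) v := hTn n
    have h2 : ‖lam ^ n • v‖ ≤ ‖(T ^ n) v‖ :=
      HasSolidNorm.solid (by rw [abs_of_nonneg h0, abs_of_nonneg (h0.trans h1)]; exact h1)
    have h3 : lam ^ n * ‖v‖ ≤ ‖T ^ n‖ * ‖v‖ := by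
      calc lam ^ n * ‖v‖ = ‖lam ^ n • v‖ := by
            rw [norm_smul (lam ^ n) v, Real.norm_eq_abs, abs_of_nonneg (by positivity)]
        _ ≤ ‖(T ^ n) v‖ := h2
        _ ≤ ‖T ^ n‖ * ‖v‖ := (T ^ n).le_opNorm v
    exact le_of_mul_le_mul_right h3 hvpos
  constructor
  · -- `ofReal lam ≤ spectralRadius T`
    by_contra hcon
    push_neg at hcon
    have hne : spectralRadius ℝ T ≠ ⊤ := hcon.ne_top
    have hρlam : (spectralRadius ℝ T).toReal < lam := by
      have h := ENNReal.toReal_strict_mono ENNReal.ofReal_ne_top hcon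
      rwa [ENNReal.toReal_ofReal hlam.le] at h
    have hρ0 : 0 ≤ (spectralRadius ℝ T).toReal := ENNReal.toReal_nonneg
    have hr0 : 0 < ((spectralRadius ℝ T).toReal + lam) / 2 := by linarith
    have hrlam : ((spectralRadius ℝ T).toReal + lam) / 2 < lam := by linarith
    have hsr_lt : spectralRadius ℝ T
        < ENNReal.ofReal (((spectralRadius ℝ T).toReal + lam) / 2) := by
      conv_lhs => rw [← ENNReal.ofReal_toReal hne]
      rw [ENNReal.ofReal_lt_ofReal_iff hr0]
      linarith
    obtain ⟨C, hC⟩ := posOp_norm_pow_le hsm hTpos hr0 (isUnit_of_spectralRadius_lt hr0 hsr_lt)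
    have hdiv : ∀ n : ℕ, (lam / (((spectralRadius ℝ T).toReal + lam) / 2)) ^ n ≤ C := by
      intro n
      rw [div_pow, div_le_iff₀ (pow_pos hr0 n)]
      exact le_trans (hlow n) (hC n)
    obtain ⟨n, hn⟩ := pow_unbounded_of_one_lt C ((one_lt_div hr0).2 hrlam)
    exact absurd (hdiv n) (not_le.2 hn)
  · -- `spectralRadius T ≤ spectralRadius S`
    have hTleS : ∀ f : Lp ℝ p μ, 0 ≤ f → T f ≤ S f := by
      intro f hf
      have h1 : MA f ≤ f := hMAle f hf
      have h2 : S (MA f) ≤ S f := hSpos.mono h1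
      have h3 : MA (S (MA f)) ≤ S (MA f) := hMAle _ (hSpos _ (hMApos f hf))
      rw [hTapp]; exact h3.trans h2
    by_contra hcon
    push_neg at hcon
    obtain ⟨c, hc1, hc2⟩ := exists_between hcon
    have hc0 : 0 < c := lt_of_le_of_lt zero_le hc1
    have hcne : c ≠ ⊤ := hc2.ne_top
    have hr0 : 0 < c.toReal := ENNReal.toReal_pos hc0.ne' hcne
    have hofr : ENNReal.ofReal c.toReal = c := ENNReal.ofReal_toReal hcne
    have hsr_lt : spectralRadius ℝ S < ENNReal.ofReal c.toReal := by rw [hofr]; exact hc1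
    obtain ⟨C, hC⟩ := posOp_norm_pow_le hsm hSpos hr0 (isUnit_of_spectralRadius_lt hr0 hsr_lt)
    have hC' : ∀ n : ℕ, ‖T ^ n‖ ≤ C * c.toReal ^ n := fun n =>
      le_trans ((hTpos.pow n).norm_le (hSpos.pow n) fun f hf =>
        hTpos.pow_apply_le hSpos hTleS n f hf) (hC n)
    have hfin := spectralRadius_le_of_norm_pow_le hr0 hC'
    rw [hofr] at hfin
    exact absurd hfin (not_le.2 hc2)
end

section
/- Consider on $\Omega=\{a,b\}$ with counting measure the SIS model with matrix $T = \begin{pmatrix}1 & 0\\ c & 2\end{pmatrix}$ for some $c>0$, $\gamma\equiv 1$, $\varphi(r)=1-r$. Then the system $u'=\varphi(u)Tu - u$ has exactly two equilibria in $[0,1]^2$: $(0,0)$ and $g^*=(0,1/2)$, and every solution with nonzero initial condition $h\in[0,1]^2$ converges to $g^*$ as $t\to\infty$. -/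
open Set Filter Topology

section Helpers

lemma exists_right_lt_of_deriv_neg {f : ℝ → ℝ} {d t0 t1 : ℝ} (hf : HasDerivAt f d t0)
    (hd : d < 0) (ht : t0 < t1) : ∃ t, t0 < t ∧ t < t1 ∧ f t < f t0 := by
  have h1 : Tendsto (slope f t0) (𝓝[>] t0) (𝓝 d) :=
    (hasDerivAt_iff_tendsto_slope.mp hf).mono_left
      (nhdsWithin_mono _ (fun x hx => ne_of_gt hx))
  have h2 : ∀ᶠ t in 𝓝[>] t0, slope f t0 t < 0 := h1.eventually (eventually_lt_nhds hd)
  have h3 : ∀ᶠ t in 𝓝[>] t0, t ∈ Ioo t0 t1 := Ioo_mem_nhdsGT ht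
  obtain ⟨t, hsl, htm⟩ := (h2.and h3).exists
  refine ⟨t, htm.1, htm.2, ?_⟩
  rw [slope_def_field] at hsl
  rcases div_neg_iff.mp hsl with ⟨_, h⟩ | ⟨h, _⟩
  · linarith [htm.1]
  · linarith

lemma exists_right_gt_of_deriv_pos {f : ℝ → ℝ} {d t0 t1 : ℝ} (hf : HasDerivAt f d t0)
    (hd : 0 < d) (ht : t0 < t1) : ∃ t, t0 < t ∧ t < t1 ∧ f t0 < f t := by
  obtain ⟨t, h1, h2, h3⟩ := exists_right_lt_of_deriv_neg hf.neg (neg_neg_iff_pos.mpr hd) ht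
  exact ⟨t, h1, h2, by simpa using h3⟩


/-- No upward crossing of a strict barrier. -/
lemma no_up_cross {f f' : ℝ → ℝ} {t0 m : ℝ}
    (hcont : ContinuousOn f (Ici t0))
    (hd : ∀ t, t0 ≤ t → HasDerivAt f (f' t) t)
    (h0 : f t0 ≤ m)
    (hbar : ∀ t, t0 ≤ t → f t = m → f' t < 0) :
    ∀ t, t0 ≤ t → f t ≤ m := by
  intro t1 ht1
  by_contra hgt
  push_neg at hgt
  have ht01 : t0 < t1 := by
    rcases eq_or_lt_of_le ht1 with h | h
    · exfalso; rw [← h] at hgt; linarith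
    · exact h
  set S := {t | t ∈ Icc t0 t1 ∧ f t ≤ m} with hS
  have hne : S.Nonempty := ⟨t0, ⟨le_refl _, ht01.le⟩, h0⟩
  have hbdd : BddAbove S := ⟨t1, fun x hx => hx.1.2⟩
  have hclosed : IsClosed S := by
    have : S = Icc t0 t1 ∩ f ⁻¹' (Iic m) := by ext x; simp [hS, and_comm]
    rw [this]
    exact ContinuousOn.preimage_isClosed_of_isClosed
      (hcont.mono (Icc_subset_Ici_self)) isClosed_Icc isClosed_Iic
  set s := sSup S with hs
  have hsmem : s ∈ S := hclosed.csSup_mem hne hbdd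
  have hst0 : t0 ≤ s := hsmem.1.1
  have hst1 : s < t1 := lt_of_le_of_ne hsmem.1.2 (by
    intro h; rw [h] at hsmem; linarith [hsmem.2])
  have habove : ∀ t, s < t → t ≤ t1 → m < f t := by
    intro t hst htt1
    by_contra hle
    push_neg at hle
    have : t ∈ S := ⟨⟨le_trans hst0 hst.le, htt1⟩, hle⟩
    exact absurd (le_csSup hbdd this) (not_le.mpr hst)
  -- f s = m
  have hfsm : f s = m := by
    refine le_antisymm hsmem.2 ?_
    have htend : Tendsto f (𝓝[>] s) (𝓝 (f s)) :=
      (hcont s hst0).mono (fun x (hx : x ∈ Ioi s) => le_trans hst0 hx.le)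
    have hev : ∀ᶠ t in 𝓝[>] s, m ≤ f t := by
      filter_upwards [Ioc_mem_nhdsGT_of_mem ⟨le_refl s, hst1⟩] with t ht
      exact (habove t ht.1 ht.2).le
    exact ge_of_tendsto htend hev
  obtain ⟨t, h1, h2, h3⟩ :=
    exists_right_lt_of_deriv_neg (hd s hst0) (hbar s hst0 hfsm) hst1
  have := habove t h1 h2.le
  rw [hfsm] at h3
  linarith

lemma no_down_cross {f f' : ℝ → ℝ} {t0 m : ℝ}
    (hcont : ContinuousOn f (Ici t0))
    (hd : ∀ t, t0 ≤ t → HasDerivAt f (f' t) t)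
    (h0 : m ≤ f t0)
    (hbar : ∀ t, t0 ≤ t → f t = m → 0 < f' t) :
    ∀ t, t0 ≤ t → m ≤ f t := by
  intro t ht
  have := no_up_cross (f := fun t => -f t) (f' := fun t => -(f' t)) (m := -m)
    (hcont.neg) (fun s hs => (hd s hs).neg) (neg_le_neg h0)
    (fun s hs he => neg_lt_zero.mpr (hbar s hs (neg_inj.mp he))) t ht
  simpa using this

/-- If `f'` is bounded below by `r > 0` whenever `f ≤ m` (for `t ≥ t0`), and `f` is bounded
above, then `f` eventually exceeds `m`. -/
lemma escape_up {f f' : ℝ → ℝ} {t0 m M r : ℝ} (hr : 0 < r)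
    (hcont : ContinuousOn f (Ici t0))
    (hd : ∀ t, t0 ≤ t → HasDerivAt f (f' t) t)
    (hM : ∀ t, t0 ≤ t → f t ≤ M)
    (hslope : ∀ t, t0 ≤ t → f t ≤ m → r ≤ f' t) :
    ∃ t, t0 ≤ t ∧ m < f t := by
  by_contra hno
  push_neg at hno
  have hder : ∀ t, t0 ≤ t → r ≤ f' t := fun t ht => hslope t ht (hno t ht)
  -- g t = f t - r * t is monotone on [t0, ∞)
  set g := fun t => f t - r * t with hg
  have hmono : MonotoneOn g (Ici t0) := by
    apply monotoneOn_of_deriv_nonneg (convex_Ici t0)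
    · exact hcont.sub (continuous_const.mul continuous_id).continuousOn
    · intro x hx
      rw [interior_Ici] at hx
      exact ((hd x hx.le).sub ((hasDerivAt_id x).const_mul r)).differentiableAt.differentiableWithinAt
    · intro x hx
      rw [interior_Ici] at hx
      have hdg : HasDerivAt g (f' x - r) x := by
        exact ((hd x hx.le).sub ((hasDerivAt_id x).const_mul r)).congr_deriv (by ring)
      rw [hdg.deriv]
      linarith [hder x hx.le]
  -- then f grows linearly, contradiction with bound M
  set T := t0 + (M - f t0 + 1) / r with hT
  have hT0 : t0 ≤ T := by
    have : 0 ≤ (M - f t0 + 1) / r := div_nonneg (by linarith [hM t0 (le_refl t0)]) hr.le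
    rw [hT]; linarith
  have := hmono (mem_Ici.mpr (le_refl t0)) (mem_Ici.mpr hT0) hT0
  have hfT : f t0 - r * t0 ≤ f T - r * T := this
  have hrT : r * (T - t0) = M - f t0 + 1 := by
    rw [hT]; field_simp; ring
  have h1 : f t0 ≤ M := hM t0 (le_refl t0)
  have h2 : f T ≤ M := hM T hT0
  nlinarith [hfT, hrT]

lemma escape_down {f f' : ℝ → ℝ} {t0 m M r : ℝ} (hr : 0 < r)
    (hcont : ContinuousOn f (Ici t0))
    (hd : ∀ t, t0 ≤ t → HasDerivAt f (f' t) t)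
    (hM : ∀ t, t0 ≤ t → M ≤ f t)
    (hslope : ∀ t, t0 ≤ t → m ≤ f t → f' t ≤ -r) :
    ∃ t, t0 ≤ t ∧ f t < m := by
  obtain ⟨t, ht, hlt⟩ := escape_up (f := fun t => -f t) (f' := fun t => -(f' t))
    (m := -m) (M := -M) hr hcont.neg (fun s hs => (hd s hs).neg)
    (fun s hs => neg_le_neg (hM s hs))
    (fun s hs hfs => by
      have h1 : m ≤ f s := by simpa using hfs
      show r ≤ -(f' s)
      linarith [hslope s hs h1])
  exact ⟨t, ht, by simpa using hlt⟩

/-- Uniqueness: a solution of `x' = -x²` on `[0,∞)` with `x 0 = a0 ∈ [0,1]` is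
`t ↦ a0 / (1 + a0 t)`. -/
lemma a_explicit {g : ℝ → ℝ} {a0 : ℝ} (ha0 : 0 ≤ a0) (ha1 : a0 ≤ 1)
    (hg0 : g 0 = a0) (hd : ∀ t, 0 ≤ t → HasDerivAt g (-(g t)^2) t) :
    ∀ t, 0 ≤ t → g t = a0 / (1 + a0 * t) := by
  intro T hT
  set sol := fun t : ℝ => a0 / (1 + a0 * t) with hsol
  have hden : ∀ t : ℝ, 0 ≤ t → 0 < 1 + a0 * t := by
    intro t ht; nlinarith
  have hsolderiv : ∀ t : ℝ, 0 ≤ t → HasDerivAt sol (-(sol t)^2) t := by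
    intro t ht
    have h1 : HasDerivAt (fun t : ℝ => 1 + a0 * t) a0 t := by
      simpa using ((hasDerivAt_id t).const_mul a0).const_add 1
    have h2 : HasDerivAt sol ((0 * (1 + a0 * t) - a0 * a0) / (1 + a0 * t) ^ 2) t :=
      (hasDerivAt_const t a0).div h1 (hden t ht).ne'
    convert h2 using 1
    rw [hsol]
    field_simp
    ring
  have hsolmem : ∀ t : ℝ, 0 ≤ t → sol t ∈ Icc (0:ℝ) 1 := by
    intro t ht
    constructor
    · exact div_nonneg ha0 (hden t ht).le
    · rw [div_le_one (hden t ht)]; nlinarith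
  have hgcont : ContinuousOn g (Icc 0 T) :=
    fun t ht => ((hd t ht.1).continuousAt).continuousWithinAt
  obtain ⟨C, hC⟩ := (isCompact_Icc (a := (0:ℝ)) (b := T)).exists_bound_of_continuousOn hgcont
  set R := max C 1 with hR
  have hR1 : (1:ℝ) ≤ R := le_max_right _ _
  have hlip : ∀ t : ℝ, LipschitzOnWith (2 * R).toNNReal (fun x : ℝ => -x^2) (Icc (-R) R) := by
    intro t
    apply LipschitzOnWith.of_dist_le_mul
    intro x hx y hy
    rw [Real.dist_eq, Real.dist_eq, Real.coe_toNNReal _ (by linarith : (0:ℝ) ≤ 2 * R)]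
    have hxy : -x^2 - -y^2 = (y - x) * (y + x) := by ring
    rw [hxy, abs_mul]
    have h1 : |y - x| = |x - y| := abs_sub_comm y x
    rw [h1]
    have h2 : |y + x| ≤ 2 * R := by
      rw [abs_le]
      rcases hx with ⟨hx1, hx2⟩; rcases hy with ⟨hy1, hy2⟩
      constructor <;> linarith
    exact mul_le_mul_of_nonneg_left h2 (abs_nonneg _) |>.trans_eq (mul_comm _ _) |>.trans_eq rfl
  have heq : EqOn g sol (Icc 0 T) := by
    apply ODE_solution_unique_of_mem_Icc_right (fun t _ => hlip t) hgcont
    · intro t ht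
      exact ((hd t ht.1).hasDerivWithinAt)
    · intro t ht
      have := hC t (Ico_subset_Icc_self ht)
      rw [Real.norm_eq_abs, abs_le] at this
      exact ⟨by linarith [le_max_left C 1], by linarith [le_max_left C 1]⟩
    · exact fun t ht => ((hsolderiv t ht.1).continuousAt).continuousWithinAt
    · intro t ht
      exact ((hsolderiv t ht.1).hasDerivWithinAt)
    · intro t ht
      have := hsolmem t ht.1
      exact ⟨by linarith [this.1], by linarith [this.2]⟩
    · simp [hsol, hg0]
  exact heq ⟨hT, le_refl T⟩

end Helpers

open Filter
/-- The SIS vector field on `Ω = {a,b}` with transmission matrix `T = [[1,0],[c,2]]`,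
`γ ≡ 1` and `φ(r) = 1-r`: `F(u) = φ(u)·Tu − u` componentwise. -/
def sisField (c : ℝ) (q : ℝ × ℝ) : ℝ × ℝ :=
  ((1 - q.1) * q.1 - q.1, (1 - q.2) * (c * q.1 + 2 * q.2) - q.2)

/-- **A two-population example.**  For the SIS model on `Ω = {a,b}` with
`T = [[1,0],[c,2]]` (`c > 0`), `γ ≡ 1`, `φ(r) = 1-r`, the system `u' = φ(u)Tu − u` has
exactly two equilibria in `[0,1]²`, namely `(0,0)` and `g* = (0,1/2)`, and every solution
with non-zero initial condition in `[0,1]²` converges to `g*` as `t → ∞`. -/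
theorem two_population_example (c : ℝ) (hc : 0 < c) :
    ({q : ℝ × ℝ | q.1 ∈ Set.Icc (0:ℝ) 1 ∧ q.2 ∈ Set.Icc (0:ℝ) 1 ∧ sisField c q = 0} =
        {((0:ℝ), (0:ℝ)), ((0:ℝ), (1/2 : ℝ))}) ∧
      (∀ h : ℝ × ℝ, h.1 ∈ Set.Icc (0:ℝ) 1 → h.2 ∈ Set.Icc (0:ℝ) 1 → h ≠ (0, 0) →
        ∀ u : ℝ → ℝ × ℝ, u 0 = h →
          (∀ t : ℝ, 0 ≤ t → HasDerivAt u (sisField c (u t)) t) →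
          Tendsto u atTop (nhds ((0:ℝ), (1/2 : ℝ)))) := by
  constructor
  · -- the set of equilibria
    ext ⟨x, y⟩
    simp only [Set.mem_setOf_eq, Set.mem_insert_iff, Set.mem_singleton_iff, sisField,
      Prod.mk.injEq, Prod.ext_iff, Set.mem_Icc, Prod.fst_zero, Prod.snd_zero]
    constructor
    · rintro ⟨⟨hx0, hx1⟩, ⟨hy0, hy1⟩, h1, h2⟩
      have hx : x = 0 := by nlinarith
      subst hx
      have hy : y * (1 - 2 * y) = 0 := by nlinarith
      rcases mul_eq_zero.mp hy with h | h
      · left; exact ⟨rfl, h⟩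
      · right; exact ⟨rfl, by linarith⟩
    · rintro (⟨hx, hy⟩ | ⟨hx, hy⟩) <;> subst hx <;> subst hy <;>
        refine ⟨by norm_num, by norm_num, by norm_num, by norm_num⟩
  · -- convergence
    intro h hh1 hh2 hne u hu0 hu'
    rw [Set.mem_Icc] at hh1 hh2
    set a : ℝ → ℝ := fun t => (u t).1 with hadef
    set b : ℝ → ℝ := fun t => (u t).2 with hbdef
    have ha' : ∀ t, 0 ≤ t → HasDerivAt a (-(a t)^2) t := by
      intro t ht
      have h1 := (ContinuousLinearMap.hasFDerivAt
        (ContinuousLinearMap.fst ℝ ℝ ℝ) (x := u t)).comp_hasDerivAt t (hu' t ht)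
      have h2 : (ContinuousLinearMap.fst ℝ ℝ ℝ) (sisField c (u t)) = -(a t)^2 := by
        simp [sisField, hadef]; ring
      rw [h2] at h1
      exact h1
    have hb' : ∀ t, 0 ≤ t →
        HasDerivAt b ((1 - b t) * (c * a t + 2 * b t) - b t) t := by
      intro t ht
      have h1 := (ContinuousLinearMap.hasFDerivAt
        (ContinuousLinearMap.snd ℝ ℝ ℝ) (x := u t)).comp_hasDerivAt t (hu' t ht)
      have h2 : (ContinuousLinearMap.snd ℝ ℝ ℝ) (sisField c (u t)) =
          (1 - b t) * (c * a t + 2 * b t) - b t := rfl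
      rw [h2] at h1
      exact h1
    have ha0 : a 0 = h.1 := by rw [hadef]; simp [hu0]
    have hb0 : b 0 = h.2 := by rw [hbdef]; simp [hu0]
    -- explicit formula for a
    have hexp : ∀ t, 0 ≤ t → a t = h.1 / (1 + h.1 * t) :=
      a_explicit hh1.1 hh1.2 ha0 ha'
    have hann : ∀ t, 0 ≤ t → 0 ≤ a t := by
      intro t ht
      rw [hexp t ht]
      exact div_nonneg hh1.1 (by nlinarith [hh1.1])
    have hatend : Tendsto a atTop (nhds 0) := by
      rcases eq_or_lt_of_le hh1.1 with h0 | h0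
      · have hev : ∀ᶠ t in atTop, (0:ℝ) = a t := by
          filter_upwards [eventually_ge_atTop (0:ℝ)] with t ht
          rw [hexp t ht, ← h0]; simp
        exact Tendsto.congr' hev tendsto_const_nhds
      · have hdenom : Tendsto (fun t : ℝ => 1 + h.1 * t) atTop atTop :=
          tendsto_atTop_add_const_left _ 1 (Tendsto.const_mul_atTop h0 tendsto_id)
        have hdiv := Tendsto.div_atTop (tendsto_const_nhds (x := h.1)) hdenom
        exact Tendsto.congr'
          ((eventually_ge_atTop (0:ℝ)).mono fun t ht => (hexp t ht).symm) hdiv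
    have hcontb : ContinuousOn b (Ici 0) :=
      fun t ht => ((hb' t ht).continuousAt).continuousWithinAt
    have hble1 : ∀ t, 0 ≤ t → b t ≤ 1 := by
      apply no_up_cross hcontb hb' (by rw [hb0]; exact hh2.2)
      intro t ht he
      show (1 - b t) * (c * a t + 2 * b t) - b t < 0
      rw [he]; norm_num
    -- a time where b is positive
    obtain ⟨ts, hts0, hbts⟩ : ∃ ts, 0 ≤ ts ∧ 0 < b ts := by
      rcases lt_or_eq_of_le hh2.1 with hpos | hzero
      · exact ⟨0, le_refl 0, by rw [hb0]; exact hpos⟩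
      · have hh1pos : 0 < h.1 := by
          rcases lt_or_eq_of_le hh1.1 with h' | h'
          · exact h'
          · exact absurd (Prod.ext h'.symm hzero.symm) hne
        have hder0 : HasDerivAt b (c * h.1) 0 := by
          have h1 := hb' 0 (le_refl 0)
          have h2 : (1 - b 0) * (c * a 0 + 2 * b 0) - b 0 = c * h.1 := by
            rw [ha0, hb0, ← hzero]; ring
          rwa [h2] at h1
        obtain ⟨t, ht0, _, hgt⟩ :=
          exists_right_gt_of_deriv_pos hder0 (mul_pos hc hh1pos) zero_lt_one
        refine ⟨t, ht0.le, ?_⟩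
        rw [hb0, ← hzero] at hgt
        exact hgt
    -- main estimate
    have key : ∀ ε : ℝ, 0 < ε → ε < 1/4 → ∃ N, ∀ t, N ≤ t → |b t - 1/2| ≤ ε := by
      intro ε hε hε4
      set δ := min (b ts) (1/4) with hδ
      have hδpos : 0 < δ := lt_min hbts (by norm_num)
      have hδle : δ ≤ 1/4 := min_le_right _ _
      have hcb_ts : ContinuousOn b (Ici ts) := hcontb.mono (Ici_subset_Ici.mpr hts0)
      have hb'ts : ∀ t, ts ≤ t →
          HasDerivAt b ((1 - b t) * (c * a t + 2 * b t) - b t) t :=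
        fun t ht => hb' t (le_trans hts0 ht)
      have hca0 : ∀ t, ts ≤ t → 0 ≤ c * a t :=
        fun t ht => mul_nonneg hc.le (hann t (le_trans hts0 ht))
      have L1 : ∀ t, ts ≤ t → δ ≤ b t := by
        apply no_down_cross hcb_ts hb'ts (min_le_left _ _)
        intro t ht he
        have h1 := hca0 t ht
        show 0 < (1 - b t) * (c * a t + 2 * b t) - b t
        rw [he]
        nlinarith
      obtain ⟨t1, ht1s, hbt1⟩ : ∃ t1, ts ≤ t1 ∧ 1/2 - ε < b t1 := by
        apply escape_up (M := 1) (r := 2 * δ * ε) (by positivity) hcb_ts hb'ts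
          (fun t ht => hble1 t (le_trans hts0 ht))
        intro t ht hle
        have h1 := L1 t ht
        have h2 := hca0 t ht
        show 2 * δ * ε ≤ (1 - b t) * (c * a t + 2 * b t) - b t
        nlinarith
      have ht10 : 0 ≤ t1 := le_trans hts0 ht1s
      have L3 : ∀ t, t1 ≤ t → 1/2 - ε ≤ b t := by
        apply no_down_cross (hcontb.mono (Ici_subset_Ici.mpr ht10))
          (fun t ht => hb' t (le_trans ht10 ht)) hbt1.le
        intro t ht he
        have h2 : 0 ≤ c * a t := mul_nonneg hc.le (hann t (le_trans ht10 ht))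
        show 0 < (1 - b t) * (c * a t + 2 * b t) - b t
        rw [he]
        nlinarith
      have hca_tend : Tendsto (fun t => c * a t) atTop (nhds 0) := by
        simpa using hatend.const_mul c
      obtain ⟨N0, hN0⟩ := eventually_atTop.mp
        (hca_tend.eventually (eventually_lt_nhds (by positivity : (0:ℝ) < ε/2)))
      set T := max t1 N0 with hT
      have hTt1 : t1 ≤ T := le_max_left _ _
      have hT0 : 0 ≤ T := le_trans ht10 hTt1
      have hTN0 : N0 ≤ T := le_max_right _ _
      obtain ⟨t2, ht2T, hbt2⟩ : ∃ t2, T ≤ t2 ∧ b t2 < 1/2 + ε := by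
        apply escape_down (M := δ) (r := ε/2) (by positivity)
          (hcontb.mono (Ici_subset_Ici.mpr hT0)) (fun t ht => hb' t (le_trans hT0 ht))
          (fun t ht => L1 t (le_trans (le_trans ht1s hTt1) ht))
        intro t ht hge
        have hub := hble1 t (le_trans hT0 ht)
        have hca1 : c * a t < ε/2 := hN0 t (le_trans hTN0 ht)
        have hca2 : 0 ≤ c * a t := mul_nonneg hc.le (hann t (le_trans hT0 ht))
        show (1 - b t) * (c * a t + 2 * b t) - b t ≤ -(ε/2)
        nlinarith
      have ht20 : 0 ≤ t2 := le_trans hT0 ht2T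
      have L6 : ∀ t, t2 ≤ t → b t ≤ 1/2 + ε := by
        apply no_up_cross (hcontb.mono (Ici_subset_Ici.mpr ht20))
          (fun t ht => hb' t (le_trans ht20 ht)) hbt2.le
        intro t ht he
        have hca1 : c * a t < ε/2 := hN0 t (le_trans (le_trans hTN0 ht2T) ht)
        have hca2 : 0 ≤ c * a t := mul_nonneg hc.le (hann t (le_trans ht20 ht))
        have hub := hble1 t (le_trans ht20 ht)
        show (1 - b t) * (c * a t + 2 * b t) - b t < 0
        nlinarith
      refine ⟨t2, fun t htt => ?_⟩
      have hl := L3 t (le_trans (le_trans hTt1 ht2T) htt)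
      have hu := L6 t htt
      rw [abs_le]
      constructor <;> linarith
    have hbtend : Tendsto b atTop (nhds (1/2)) := by
      rw [Metric.tendsto_atTop]
      intro ε hε
      obtain ⟨N, hN⟩ := key (min (ε/2) (1/8)) (lt_min (by linarith) (by norm_num))
        (lt_of_le_of_lt (min_le_right _ _) (by norm_num))
      refine ⟨N, fun t ht => ?_⟩
      rw [Real.dist_eq]
      have h1 := hN t ht
      have h2 : min (ε/2) (1/8) ≤ ε/2 := min_le_left _ _
      linarith
    have hfinal : Tendsto (fun t => (a t, b t)) atTop (nhds ((0:ℝ), (1/2:ℝ))) :=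
      hatend.prodMk_nhds hbtend
    have hue : (fun t => (a t, b t)) = u := by funext t; rfl
    rwa [hue] at hfinal
end
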